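/- For all real numbers p > 0 and q > 0, ∫_{-∞}^{∞} ((1+e^{-x})^{-p} - (1+e^{-x})^{-q}) dx = ψ(q) - ψ(p). -/

import Mathlib

/-!
The substitution `t = σ x` by the logistic sigmoid, with `σ' = σ (1 - σ)`, turns the integral into
Gauss's integral `∫₀¹ (t^(p-1) - t^(q-1)) / (1 - t) dt`. Expanding `1 / (1 - t)` as a geometric
series and integrating termwise gives `∑ₖ (1 / (p + k) - 1 / (q + k))`, which telescopes to
`ψ q - ψ p` by `ψ (x + 1) = ψ x + 1 / x`, once one knows `ψ x - log x → 0`. That limit comes from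
the convexity of `log ∘ Γ` (Bohr–Mollerup): comparing `ψ` with the slope of `log ∘ Γ` on
`[x, x + 1]`, which is `log x`, gives `log x - 1 / x ≤ ψ x ≤ log x`.
-/

open MeasureTheory Real

/-- The digamma function `ψ(x) = Γ'(x)/Γ(x)`. -/
noncomputable def digamma (x : ℝ) : ℝ := deriv Real.Gamma x / Real.Gamma x

open Set Filter Topology

lemma ne_neg_natCast_of_pos {x : ℝ} (hx : 0 < x) (m : ℕ) : x ≠ -m := by
  linarith [(m.cast_nonneg : (0 : ℝ) ≤ m)]

lemma hasDerivAt_log_Gamma {x : ℝ} (hx : ∀ m : ℕ, x ≠ -m) :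
    HasDerivAt (fun y ↦ log (Gamma y)) (digamma x) x :=
  (differentiableAt_Gamma hx).hasDerivAt.log (Gamma_ne_zero hx)

lemma log_Gamma_add_one {x : ℝ} (hx : ∀ m : ℕ, x ≠ -m) :
    log (Gamma (x + 1)) = log (Gamma x) + log x := by
  have hx₀ : x ≠ 0 := by simpa using hx 0
  rw [Gamma_add_one hx₀, log_mul hx₀ (Gamma_ne_zero hx), add_comm]

lemma digamma_add_one {x : ℝ} (hx : ∀ m : ℕ, x ≠ -m) :
    digamma (x + 1) = digamma x + x⁻¹ := by
  have hx₀ : x ≠ 0 := by simpa using hx 0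
  have hΓ : HasDerivAt (fun y ↦ Gamma (y + 1)) (Gamma x + x * deriv Gamma x) x := by
    refine ((hasDerivAt_id x).mul (differentiableAt_Gamma hx).hasDerivAt
      |>.congr_of_eventuallyEq ?_).congr_deriv (by simp)
    filter_upwards [eventually_ne_nhds hx₀] with y hy using Gamma_add_one hy
  rw [digamma, digamma, ← deriv_comp_add_const, hΓ.deriv, Gamma_add_one hx₀]
  field_simp [Gamma_ne_zero hx]
  ring

lemma digamma_add_nat {x : ℝ} (hx : ∀ m : ℕ, x ≠ -m) (n : ℕ) :
    digamma (x + n) = digamma x + ∑ k ∈ Finset.range n, (x + k)⁻¹ := by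
  induction n with
  | zero => simp
  | succ n ih =>
    have hxn : ∀ m : ℕ, x + n ≠ -m := fun m h ↦ hx (m + n) (by push_cast; linarith)
    rw [Nat.cast_succ, ← add_assoc, digamma_add_one hxn, ih, Finset.sum_range_succ, add_assoc]

lemma digamma_le_log {x : ℝ} (hx : 0 < x) : digamma x ≤ log x := by
  have hx' := ne_neg_natCast_of_pos hx
  have := convexOn_log_Gamma.le_slope_of_hasDerivAt (mem_Ioi.2 hx)
    (mem_Ioi.2 (by linarith : 0 < x + 1)) (by linarith) (hasDerivAt_log_Gamma hx')
  rwa [slope_def_field, Function.comp_apply, Function.comp_apply, log_Gamma_add_one hx',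
    add_sub_cancel_left, add_sub_cancel_left, div_one] at this

lemma log_le_digamma_add_one {x : ℝ} (hx : 0 < x) : log x ≤ digamma (x + 1) := by
  have hx₁ : 0 < x + 1 := by linarith
  have := convexOn_log_Gamma.slope_le_of_hasDerivAt (mem_Ioi.2 hx) (mem_Ioi.2 hx₁)
    (by linarith) (hasDerivAt_log_Gamma (ne_neg_natCast_of_pos hx₁))
  rwa [slope_def_field, Function.comp_apply, Function.comp_apply,
    log_Gamma_add_one (ne_neg_natCast_of_pos hx), add_sub_cancel_left, add_sub_cancel_left,
    div_one] at this

lemma tendsto_digamma_sub_log : Tendsto (fun x ↦ digamma x - log x) atTop (𝓝 0) := by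
  have hlower : ∀ᶠ x in atTop, -x⁻¹ ≤ digamma x - log x := by
    filter_upwards [eventually_gt_atTop 0] with x hx
    have := log_le_digamma_add_one hx
    rw [digamma_add_one (ne_neg_natCast_of_pos hx)] at this
    linarith
  have hupper : ∀ᶠ x in atTop, digamma x - log x ≤ 0 := by
    filter_upwards [eventually_gt_atTop 0] with x hx
    linarith [digamma_le_log hx]
  have hinv : Tendsto (fun x : ℝ ↦ -x⁻¹) atTop (𝓝 0) := by
    simpa using (tendsto_inv_atTop_zero (𝕜 := ℝ)).neg
  exact tendsto_of_tendsto_of_tendsto_of_le_of_le' hinv tendsto_const_nhds hlower hupper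

lemma tendsto_digamma_add_sub_log (a : ℝ) :
    Tendsto (fun x ↦ digamma (x + a) - log x) atTop (𝓝 0) := by
  simpa using (tendsto_digamma_sub_log.comp (tendsto_atTop_add_const_right _ a tendsto_id)).add
    (tendsto_log_comp_add_sub_log a)

lemma hasSum_inv_add_nat_sub_inv_add_nat {p q : ℝ} (hp : 0 < p) (hpq : p ≤ q) :
    HasSum (fun k : ℕ ↦ (p + k)⁻¹ - (q + k)⁻¹) (digamma q - digamma p) := by
  have hnonneg (k : ℕ) : 0 ≤ (p + k)⁻¹ - (q + k)⁻¹ :=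
    sub_nonneg.2 (inv_anti₀ (by positivity) (by linarith))
  have hpartial (n : ℕ) : ∑ k ∈ Finset.range n, ((p + k)⁻¹ - (q + k)⁻¹) =
      digamma q - digamma p + ((digamma (n + p) - log n) - (digamma (n + q) - log n)) := by
    rw [Finset.sum_sub_distrib, add_comm (n : ℝ) p, add_comm (n : ℝ) q,
      digamma_add_nat (ne_neg_natCast_of_pos hp),
      digamma_add_nat (ne_neg_natCast_of_pos (hp.trans_le hpq))]
    ring
  rw [hasSum_iff_tendsto_nat_of_nonneg hnonneg, funext hpartial]
  simpa using tendsto_const_nhds.add (((tendsto_digamma_add_sub_log p).sub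
    (tendsto_digamma_add_sub_log q)).comp tendsto_natCast_atTop_atTop)

lemma integrableOn_Ioo_rpow_sub_one {a : ℝ} (ha : 0 < a) :
    IntegrableOn (fun t : ℝ ↦ t ^ (a - 1)) (Ioo 0 1) :=
  (intervalIntegral.integrableOn_Ioo_rpow_iff zero_lt_one).2 (by linarith)

lemma integral_Ioo_rpow_sub_one {a : ℝ} (ha : 0 < a) :
    ∫ t in Ioo (0 : ℝ) 1, t ^ (a - 1) = a⁻¹ := by
  rw [← integral_Ioc_eq_integral_Ioo, ← intervalIntegral.integral_of_le zero_le_one,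
    integral_rpow (Or.inl (by linarith)), sub_add_cancel, one_rpow, zero_rpow ha.ne', sub_zero,
    one_div]

lemma hasSum_rpow_add_nat_sub_one {t : ℝ} (ht : t ∈ Ioo (0 : ℝ) 1) (a : ℝ) :
    HasSum (fun k : ℕ ↦ t ^ (a + k - 1)) (t ^ (a - 1) / (1 - t)) := by
  have h := (hasSum_geometric_of_lt_one ht.1.le ht.2).mul_left (t ^ (a - 1))
  simp only [← rpow_natCast, ← rpow_add ht.1, sub_add_eq_add_sub] at h
  rwa [div_eq_mul_inv]

theorem integral_Ioo_rpow_sub_rpow_div_one_sub {p q : ℝ} (hp : 0 < p) (hq : 0 < q) :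
    ∫ t in Ioo (0 : ℝ) 1, (t ^ (p - 1) - t ^ (q - 1)) / (1 - t) = digamma q - digamma p := by
  wlog hpq : p ≤ q generalizing p q
  · rw [← neg_sub (digamma p), ← this hq hp (le_of_not_ge hpq), ← integral_neg]
    congr with t
    ring
  set F : ℕ → ℝ → ℝ := fun k t ↦ t ^ (p + k - 1) - t ^ (q + k - 1)
  have hpk (k : ℕ) : 0 < p + k := by positivity
  have hqk (k : ℕ) : 0 < q + k := by positivity
  have hF_int (k : ℕ) : IntegrableOn (F k) (Ioo 0 1) :=
    (integrableOn_Ioo_rpow_sub_one (hpk k)).sub (integrableOn_Ioo_rpow_sub_one (hqk k))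
  have hF_integral (k : ℕ) : ∫ t in Ioo (0 : ℝ) 1, F k t = (p + k)⁻¹ - (q + k)⁻¹ := by
    rw [integral_sub (integrableOn_Ioo_rpow_sub_one (hpk k))
      (integrableOn_Ioo_rpow_sub_one (hqk k)), integral_Ioo_rpow_sub_one (hpk k),
      integral_Ioo_rpow_sub_one (hqk k)]
  have hF_norm (k : ℕ) : ∫ t in Ioo (0 : ℝ) 1, ‖F k t‖ = (p + k)⁻¹ - (q + k)⁻¹ := by
    rw [← hF_integral]
    refine setIntegral_congr_fun measurableSet_Ioo fun t ht ↦ norm_of_nonneg (sub_nonneg.2 ?_)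
    exact rpow_le_rpow_of_exponent_ge ht.1 ht.2.le (by linarith)
  -- The terms are nonnegative, so their summability, known from the digamma side, is absolute.
  have hsum := hasSum_inv_add_nat_sub_inv_add_nat hp hpq
  have hF_sum := hasSum_integral_of_summable_integral_norm hF_int
    (by simpa only [hF_norm] using hsum.summable)
  simp only [hF_integral] at hF_sum
  refine (setIntegral_congr_fun measurableSet_Ioo fun t ht ↦ ?_).trans (hF_sum.unique hsum)
  rw [sub_div]
  exact ((hasSum_rpow_add_nat_sub_one ht p).sub (hasSum_rpow_add_nat_sub_one ht q)).tsum_eq.symm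

lemma integral_comp_sigmoid_smul_deriv {E : Type*} [NormedAddCommGroup E] [NormedSpace ℝ E]
    (g : ℝ → E) :
    ∫ x, (sigmoid x * (1 - sigmoid x)) • g (sigmoid x) = ∫ t in Ioo (0 : ℝ) 1, g t := by
  have := integral_image_eq_integral_abs_deriv_smul MeasurableSet.univ
    (fun x _ ↦ (hasDerivAt_sigmoid x).hasDerivWithinAt) sigmoid_injective.injOn g
  rw [image_univ, range_sigmoid, setIntegral_univ] at this
  rw [this]
  congr with x
  rw [abs_of_pos (mul_pos (sigmoid_pos x) (sub_pos.2 (sigmoid_lt_one x)))]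

lemma one_add_exp_neg_rpow_neg (x p : ℝ) : (1 + exp (-x)) ^ (-p) = sigmoid x ^ p := by
  rw [rpow_neg (by positivity), ← inv_rpow (by positivity), sigmoid_def]

theorem integral_one_add_exp_neg_rpow_sub (p q : ℝ) (hp : 0 < p) (hq : 0 < q) :
    ∫ x : ℝ, ((1 + Real.exp (-x)) ^ (-p) - (1 + Real.exp (-x)) ^ (-q))
      = digamma q - digamma p := by
  have hσ (x : ℝ) : (1 + exp (-x)) ^ (-p) - (1 + exp (-x)) ^ (-q) =
      (sigmoid x * (1 - sigmoid x)) •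
        ((sigmoid x ^ (p - 1) - sigmoid x ^ (q - 1)) / (1 - sigmoid x)) := by
    have h₀ := sigmoid_pos x
    have h₁ : 1 - sigmoid x ≠ 0 := (sub_pos.2 (sigmoid_lt_one x)).ne'
    rw [one_add_exp_neg_rpow_neg, one_add_exp_neg_rpow_neg, smul_eq_mul,
      rpow_sub_one h₀.ne', rpow_sub_one h₀.ne']
    field_simp
  simp only [hσ]
  rw [integral_comp_sigmoid_smul_deriv fun t ↦ (t ^ (p - 1) - t ^ (q - 1)) / (1 - t),
    integral_Ioo_rpow_sub_rpow_div_one_sub hp hq]
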